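/- Let q = 2^m and X ∈ F_{q^3}, written X = x + yα + zα^q with x, y, z ∈ F_q, where α ∈ F_{q^3} has Tr(α) = 0 and {1, α, α^q} a basis. Then Tr(X^{q²+q+2}) = x⁴ + x²(y² + z² + yz)·Tr(α^{q+1}) + x·Tr((yα + zα^q)³), where Tr = Tr_{F_{q^3}/F_q}. -/

import Mathlib

/-!
Let φ be the `q`-power Frobenius: it fixes `F`, has order 3 on `E`, and `Tr = id + φ + φ²`.
The norm `N = X·φX·φ²X` is φ-invariant, so `Tr(X^(q²+q+2)) = Tr(X·N) = N·Tr X`.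
For `X = x + A` with `A = yα + zα^q` we have `Tr A = 0`, hence `Tr X = 3x = x` and
`N = x³ + x·e₂ + e₃` in the elementary symmetric functions of `A, φA, φ²A`.
In characteristic 2, `e₁ = 0` gives `e₃ = A³ + (φA)³ + (φ²A)³ = Tr(A³)`, and
`e₂ = (y² + z² + yz)·Tr(α^(q+1))`.
-/

namespace CharTwo

variable {R : Type*} [CommRing R] [CharP R 2]

theorem cube_sum_eq_mul_of_add_eq_zero {a b c : R} (h : a + b + c = 0) :
    a ^ 3 + b ^ 3 + c ^ 3 = a * b * c := by
  linear_combination (a ^ 2 + b ^ 2 + c ^ 2 - a * b - b * c - c * a) * h +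
    a * b * c * two_eq_zero (R := R)

theorem mul_add_mul_add_mul_of_cyclic_comb {α β γ : R} (h : α + β + γ = 0) (y z : R) :
    (y * α + z * β) * (y * β + z * γ) + (y * β + z * γ) * (y * γ + z * α) +
        (y * γ + z * α) * (y * α + z * β) =
      (y ^ 2 + z ^ 2 + y * z) * (α * β + β * γ + γ * α) := by
  linear_combination y * z * (α + β + γ) * h -
    y * z * (α * β + β * γ + γ * α) * two_eq_zero (R := R)

theorem prod_mul_sum_of_add_eq_zero {a b c : R} (h : a + b + c = 0) (x : R) :
    (x + a) * (x + b) * (x + c) * ((x + a) + (x + b) + (x + c)) =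
      x ^ 4 + x ^ 2 * (a * b + b * c + c * a) + x * (a ^ 3 + b ^ 3 + c ^ 3) := by
  rw [cube_sum_eq_mul_of_add_eq_zero h]
  linear_combination
    (4 * x ^ 3 + x ^ 2 * (a + b + c) + x * (a * b + b * c + c * a) + a * b * c) * h +
    (x ^ 4 + x ^ 2 * (a * b + b * c + c * a) + x * a * b * c) * two_eq_zero (R := R)

end CharTwo

section CyclicTrace

variable {R : Type*} [CommRing R] (φ : R →+* R)

def cyclicTrace (u : R) : R := u + φ u + φ (φ u)

variable {φ}

theorem cyclicTrace_sq_mul_map_mul_map_map (hφ : ∀ u, φ (φ (φ u)) = u) (u : R) :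
    cyclicTrace φ (u ^ 2 * φ u * φ (φ u)) = u * φ u * φ (φ u) * cyclicTrace φ u := by
  simp only [cyclicTrace, map_mul, map_pow, hφ]
  ring

theorem cyclicTrace_sq_mul_map_mul_map_map_of_trace_eq_zero [CharP R 2]
    (hφ : ∀ u, φ (φ (φ u)) = u) {α : R} (hα : cyclicTrace φ α = 0) {x y z : R}
    (hx : φ x = x) (hy : φ y = y) (hz : φ z = z) :
    cyclicTrace φ ((x + (y * α + z * φ α)) ^ 2 * φ (x + (y * α + z * φ α)) *
        φ (φ (x + (y * α + z * φ α)))) =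
      x ^ 4 + x ^ 2 * ((y ^ 2 + z ^ 2 + y * z) * cyclicTrace φ (α * φ α)) +
        x * cyclicTrace φ ((y * α + z * φ α) ^ 3) := by
  have htrace_mul :
      cyclicTrace φ (α * φ α) = α * φ α + φ α * φ (φ α) + φ (φ α) * α := by
    simp only [cyclicTrace, map_mul, hφ]
  have hsum :
      y * α + z * φ α + (y * φ α + z * φ (φ α)) + (y * φ (φ α) + z * α) = 0 := by
    unfold cyclicTrace at hα
    linear_combination (y + z) * hα
  rw [cyclicTrace_sq_mul_map_mul_map_map hφ, htrace_mul,
    ← CharTwo.mul_add_mul_add_mul_of_cyclic_comb hα y z]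
  simp only [cyclicTrace, map_add, map_mul, map_pow, hx, hy, hz, hφ]
  exact CharTwo.prod_mul_sum_of_add_eq_zero hsum x

end CyclicTrace

theorem stmt_7_general (m : ℕ) (q : ℕ) (hq : q = 2 ^ m)
    (F E : Type*) [Field F] [Fintype F] [Field E] [Fintype E] [Algebra F E]
    (hF : Fintype.card F = q) (hE : Fintype.card E = q ^ 3)
    (Tr : E → E) (hTr : ∀ X, Tr X = X + X ^ q + X ^ q ^ 2)
    (α : E) (hαtr : Tr α = 0) :
    ∀ x y z : F,
      Tr ((algebraMap F E x + algebraMap F E y * α + algebraMap F E z * α ^ q) ^ (q ^ 2 + q + 2)) =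
        (algebraMap F E x) ^ 4 +
          (algebraMap F E x) ^ 2 *
            (algebraMap F E (y ^ 2 + z ^ 2 + y * z) * Tr (α ^ (q + 1))) +
          algebraMap F E x * Tr ((algebraMap F E y * α + algebraMap F E z * α ^ q) ^ 3) := by
  intro x y z
  have : CharP E 2 := charP_of_card_eq_prime_pow (f := m * 3) (by rw [hE, hq, pow_mul])
  set φ := (FiniteField.frobeniusAlgHom F E : E →+* E)
  have hφ : ∀ u, φ u = u ^ q := fun u => by simp [φ, hF]
  have hTrφ : Tr = cyclicTrace φ := funext fun u => by
    rw [hTr, cyclicTrace, hφ, hφ, ← pow_mul, sq]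
  have hφ3 : ∀ u, φ (φ (φ u)) = u := fun u => by
    rw [hφ, hφ, hφ, ← pow_mul, ← pow_mul, ← pow_three, ← hE, FiniteField.pow_card]
  have hφF : ∀ t : F, φ (algebraMap F E t) = algebraMap F E t :=
    (FiniteField.frobeniusAlgHom F E).commutes
  have hpow : ∀ u : E, u ^ (q ^ 2 + q + 2) = u ^ 2 * φ u * φ (φ u) := fun u => by
    rw [hφ, hφ, ← pow_mul, ← pow_add, ← pow_add]
    ring_nf
  rw [hTrφ, hpow, add_assoc, ← hφ, pow_succ' α q, ← hφ]
  simp only [map_add (algebraMap F E), map_mul (algebraMap F E), map_pow (algebraMap F E)]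
  exact cyclicTrace_sq_mul_map_mul_map_map_of_trace_eq_zero hφ3 (hTrφ ▸ hαtr)
    (hφF x) (hφF y) (hφF z)

theorem stmt_7 (m : ℕ) (hm : 0 < m) (q : ℕ) (hq : q = 2 ^ m)
    (F E : Type*) [Field F] [Fintype F] [Field E] [Fintype E] [Algebra F E]
    (hF : Fintype.card F = q) (hE : Fintype.card E = q ^ 3)
    (Tr : E → E) (hTr : ∀ X, Tr X = X + X ^ q + X ^ q ^ 2)
    (α : E) (hα0 : α ≠ 0) (hαtr : Tr α = 0)
    (hb : ∃ b : Module.Basis (Fin 3) F E, b 0 = 1 ∧ b 1 = α ∧ b 2 = α ^ q) :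
    ∀ x y z : F,
      Tr ((algebraMap F E x + algebraMap F E y * α + algebraMap F E z * α ^ q) ^ (q ^ 2 + q + 2)) =
        (algebraMap F E x) ^ 4 +
          (algebraMap F E x) ^ 2 *
            (algebraMap F E (y ^ 2 + z ^ 2 + y * z) * Tr (α ^ (q + 1))) +
          algebraMap F E x * Tr ((algebraMap F E y * α + algebraMap F E z * α ^ q) ^ 3) :=
  stmt_7_general m q hq F E hF hE Tr hTr α hαtr
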